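/- Robustness certificate soundness: Assume X ∈ {0,1}^{N×D} and that the bounds are valid. Fix a class y* ∈ {1,…,K} and suppose that for every class y ≠ y* there exist dual-feasible variables (matrices Ω^{(l),y} with entries in [0,1], η^y ∈ ℝ^N with η^y ≥ 0, ρ^y ≥ 0) such that g(X, e_{y*} − e_y, Ω^{y}, η^y, ρ^y) > 0, where e_k denotes the k-th standard basis vector of ℝ^K. Then for every admissible perturbation X̃ ∈ X_{q,Q}(X) and every y ≠ y*, the exact GNN output satisfies f(X̃)_{y*} > f(X̃)_y; i.e., no admissible perturbation changes the predicted class away from y*. -/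

import Mathlib

open scoped BigOperators

/-- The admissible (binary, `L0`-constrained) perturbation set `X_{q,Q}(X)`:
binary matrices differing from `X` in at most `Q` entries overall and
in at most `q` entries in every row. -/
def XsetBin {N D : ℕ} (X : Matrix (Fin N) (Fin D) ℝ) (q Q : ℕ) :
    Set (Matrix (Fin N) (Fin D) ℝ) :=
  {Xt | (∀ n d, Xt n d = 0 ∨ Xt n d = 1) ∧
    (Finset.univ.filter fun p : Fin N × Fin D => Xt p.1 p.2 ≠ X p.1 p.2).card ≤ Q ∧
    ∀ n, (Finset.univ.filter fun d : Fin D => Xt n d ≠ X n d).card ≤ q}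

/-- The relaxed (`[0,1]`-valued, `L1`-constrained) perturbation set `X̂_{q,Q}(X)`. -/
def XsetRel {N D : ℕ} (X : Matrix (Fin N) (Fin D) ℝ) (q Q : ℕ) :
    Set (Matrix (Fin N) (Fin D) ℝ) :=
  {Xt | (∀ n d, 0 ≤ Xt n d ∧ Xt n d ≤ 1) ∧
    (∑ n, ∑ d, |Xt n d - X n d|) ≤ (Q : ℝ) ∧
    ∀ n, (∑ d, |Xt n d - X n d|) ≤ (q : ℝ)}

/-- An `L`-layer sliced ReLU GNN with `L = ℓ + 2 ≥ 2` layers.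
`nd l` is the number of node rows at layer `l` and `fd l` the feature dimension at
layer `l`; the message passing matrices `A l`, weights `W l` and biases `b l` are
used for `l = 1, …, ℓ + 1`.  The last message passing matrix has a single row. -/
structure SlicedGNN (ℓ : ℕ) where
  nd : ℕ → ℕ
  fd : ℕ → ℕ
  A : (l : ℕ) → Matrix (Fin (nd (l + 1))) (Fin (nd l)) ℝ
  W : (l : ℕ) → Matrix (Fin (fd l)) (Fin (fd (l + 1))) ℝ
  b : (l : ℕ) → Fin (fd (l + 1)) → ℝ
  A_nonneg : ∀ l i j, 0 ≤ A l i j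
  last_single : nd (ℓ + 2) = 1

namespace SlicedGNN

variable {ℓ : ℕ}

/-- Post-activations of the exact forward pass: `post Xt l = H^{(l+1)}`, i.e.
`post Xt 0 = H^{(1)} = Xt` and `post Xt l = ReLU(Ĥ^{(l+1)})` for `l ≥ 1`. -/
noncomputable def post (net : SlicedGNN ℓ)
    (Xt : Matrix (Fin (net.nd 1)) (Fin (net.fd 1)) ℝ) :
    (l : ℕ) → Matrix (Fin (net.nd (l + 1))) (Fin (net.fd (l + 1))) ℝ
  | 0 => Xt
  | l + 1 => Matrix.of fun i j =>
      max ((net.A (l + 1) * net.post Xt l * net.W (l + 1)) i j + net.b (l + 1) j) 0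

/-- Pre-activations of the exact forward pass: `pre Xt l = Ĥ^{(l+1)}` for `l ≥ 1`
(and `pre Xt 0 = Xt` by convention).  The exact output of the network is
`f(Xt) = Ĥ^{(L)} = pre Xt (ℓ + 1)`. -/
noncomputable def pre (net : SlicedGNN ℓ)
    (Xt : Matrix (Fin (net.nd 1)) (Fin (net.fd 1)) ℝ) :
    (l : ℕ) → Matrix (Fin (net.nd (l + 1))) (Fin (net.fd (l + 1))) ℝ
  | 0 => Xt
  | l + 1 => Matrix.of fun i j =>
      (net.A (l + 1) * net.post Xt l * net.W (l + 1)) i j + net.b (l + 1) j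

/-- Membership in the relaxed constraint set `Z(Xt)`:
`Hv l` plays the role of `H^{(l+1)}`, the pre-activations `Ĥ^{(l+1)}` being the
deterministic expressions `A^{(l)} H^{(l)} W^{(l)} + b^{(l)}`; for each layer
`k + 2 ∈ {2, …, ℓ + 1}` the ReLU is replaced by its convex envelope constraints
according to the sign pattern of the bounds `R`, `S`. -/
def InZ (net : SlicedGNN ℓ)
    (R S : (l : ℕ) → Matrix (Fin (net.nd l)) (Fin (net.fd l)) ℝ)
    (Xt : Matrix (Fin (net.nd 1)) (Fin (net.fd 1)) ℝ)
    (Hv : (l : ℕ) → Matrix (Fin (net.nd (l + 1))) (Fin (net.fd (l + 1))) ℝ) : Prop :=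
  Hv 0 = Xt ∧
  ∀ k < ℓ, ∀ i j,
    (S (k + 2) i j ≤ 0 → Hv (k + 1) i j = 0) ∧
    (0 ≤ R (k + 2) i j → 0 < S (k + 2) i j →
      Hv (k + 1) i j = (net.A (k + 1) * Hv k * net.W (k + 1)) i j + net.b (k + 1) j) ∧
    (R (k + 2) i j < 0 → 0 < S (k + 2) i j →
      0 ≤ Hv (k + 1) i j ∧
      (net.A (k + 1) * Hv k * net.W (k + 1)) i j + net.b (k + 1) j ≤ Hv (k + 1) i j ∧
      Hv (k + 1) i j * (S (k + 2) i j - R (k + 2) i j) ≤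
        S (k + 2) i j *
          ((net.A (k + 1) * Hv k * net.W (k + 1)) i j + net.b (k + 1) j - R (k + 2) i j))

/-- The final-layer pre-activation `Ĥ^{(L)}` of a point of the relaxed constraint set. -/
noncomputable def outZ (net : SlicedGNN ℓ)
    (Hv : (l : ℕ) → Matrix (Fin (net.nd (l + 1))) (Fin (net.fd (l + 1))) ℝ) :
    Matrix (Fin (net.nd (ℓ + 2))) (Fin (net.fd (ℓ + 2))) ℝ :=
  Matrix.of fun i j => (net.A (ℓ + 1) * Hv ℓ * net.W (ℓ + 1)) i j + net.b (ℓ + 1) j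

end SlicedGNN

/-- The objective `c · M` for a (single-row) output matrix `M`. -/
def cdot {m k : ℕ} (c : Fin k → ℝ) (M : Matrix (Fin m) (Fin k) ℝ) : ℝ :=
  ∑ i, ∑ j, c j * M i j

namespace SlicedGNN

variable {ℓ : ℕ}

/-- Dual feasibility for the dual of the relaxed problem (Theorem 4.3):
`Ω^{(l)}` has entries in `[0,1]` for the layers `l = 2, …, ℓ + 1`, `η ≥ 0`, `ρ ≥ 0`,
and `Φ`, `Φ̂` are the backward-pass quantities determined by
`Φ^{(L)} = -c`, `Φ̂^{(l)} = Ȧ^{(l)ᵀ} Φ^{(l+1)} W^{(l)ᵀ}` for `l = 1, …, ℓ + 1`, and the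
sign-pattern case distinction defining `Φ^{(l)}` from `Φ̂^{(l)}` for `l = 2, …, ℓ + 1`. -/
def DualFeasible (net : SlicedGNN ℓ)
    (R S : (l : ℕ) → Matrix (Fin (net.nd l)) (Fin (net.fd l)) ℝ)
    (c : Fin (net.fd (ℓ + 2)) → ℝ)
    (Ω : (l : ℕ) → Matrix (Fin (net.nd l)) (Fin (net.fd l)) ℝ)
    (η : Fin (net.nd 1) → ℝ) (ρ : ℝ)
    (Φ Φhat : (l : ℕ) → Matrix (Fin (net.nd l)) (Fin (net.fd l)) ℝ) : Prop :=
  (∀ k < ℓ, ∀ i j, 0 ≤ Ω (k + 2) i j ∧ Ω (k + 2) i j ≤ 1) ∧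
  (∀ n, 0 ≤ η n) ∧ 0 ≤ ρ ∧
  (∀ i j, Φ (ℓ + 2) i j = -c j) ∧
  (∀ l, 1 ≤ l → l ≤ ℓ + 1 → Φhat l = (net.A l).transpose * Φ (l + 1) * (net.W l).transpose) ∧
  (∀ k < ℓ, ∀ i j,
    (S (k + 2) i j ≤ 0 → Φ (k + 2) i j = 0) ∧
    (0 ≤ R (k + 2) i j → 0 < S (k + 2) i j → Φ (k + 2) i j = Φhat (k + 2) i j) ∧
    (R (k + 2) i j < 0 → 0 < S (k + 2) i j →
      Φ (k + 2) i j =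
        S (k + 2) i j / (S (k + 2) i j - R (k + 2) i j) * max (Φhat (k + 2) i j) 0 -
          Ω (k + 2) i j * max (-Φhat (k + 2) i j) 0))

/-- The dual objective `g(X, c, Ω, η, ρ)` of Theorem 4.3 (the dual variables `Ω` enter
only through the backward-pass quantities `Φ`, `Φ̂`).  Here
`Δ_{nd} = [Φ̂^{(1)}_{nd}]₊ (1 - X_{nd}) + [Φ̂^{(1)}_{nd}]₋ X_{nd}` and
`Ψ_{nd} = max (Δ_{nd} - (η_n + ρ)) 0`. -/
noncomputable def dualObj (net : SlicedGNN ℓ)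
    (R S : (l : ℕ) → Matrix (Fin (net.nd l)) (Fin (net.fd l)) ℝ)
    (X : Matrix (Fin (net.nd 1)) (Fin (net.fd 1)) ℝ) (q Q : ℕ)
    (η : Fin (net.nd 1) → ℝ) (ρ : ℝ)
    (Φ Φhat : (l : ℕ) → Matrix (Fin (net.nd l)) (Fin (net.fd l)) ℝ) : ℝ :=
  (∑ k ∈ Finset.range ℓ, ∑ i, ∑ j,
      if R (k + 2) i j < 0 ∧ 0 < S (k + 2) i j then
        S (k + 2) i j * R (k + 2) i j / (S (k + 2) i j - R (k + 2) i j) *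
          max (Φhat (k + 2) i j) 0
      else 0) -
    (∑ l ∈ Finset.range (ℓ + 1), ∑ i, ∑ j, Φ (l + 2) i j * net.b (l + 1) j) -
    (∑ n, ∑ d, X n d * Φhat 1 n d) -
    (∑ n, ∑ d,
      max ((max (Φhat 1 n d) 0 * (1 - X n d) + max (-Φhat 1 n d) 0 * X n d) - (η n + ρ)) 0) -
    (q : ℝ) * (∑ n, η n) - (Q : ℝ) * ρ

end SlicedGNN

lemma entry_key (Rv Sv hv hh φh φ Ωv : ℝ)
    (hΩ0 : 0 ≤ Ωv) (hΩ1 : Ωv ≤ 1)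
    (h1 : Sv ≤ 0 → hv = 0)
    (h2 : 0 ≤ Rv → 0 < Sv → hv = hh)
    (h3 : Rv < 0 → 0 < Sv → 0 ≤ hv ∧ hh ≤ hv ∧ hv * (Sv - Rv) ≤ Sv * (hh - Rv))
    (f1 : Sv ≤ 0 → φ = 0)
    (f2 : 0 ≤ Rv → 0 < Sv → φ = φh)
    (f3 : Rv < 0 → 0 < Sv → φ = Sv / (Sv - Rv) * max φh 0 - Ωv * max (-φh) 0) :
    (if Rv < 0 ∧ 0 < Sv then Sv * Rv / (Sv - Rv) * max φh 0 else 0) - φ * hh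
      ≤ -(φh * hv) := by
  by_cases hS : Sv ≤ 0
  · have hns : ¬(Rv < 0 ∧ 0 < Sv) := fun h => absurd hS (not_le.mpr h.2)
    rw [if_neg hns, h1 hS, f1 hS]; ring_nf; rfl
  · push_neg at hS
    by_cases hR : 0 ≤ Rv
    · have hns : ¬(Rv < 0 ∧ 0 < Sv) := fun h => absurd hR (not_le.mpr h.1)
      rw [if_neg hns, h2 hR hS, f2 hR hS]; ring_nf; rfl
    · push_neg at hR
      obtain ⟨hv0, hhv, henv⟩ := h3 hR hS
      rw [if_pos ⟨hR, hS⟩, f3 hR hS]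
      have hd : 0 < Sv - Rv := by linarith
      set p := max φh 0 with hp
      set m := max (-φh) 0 with hm
      have hp0 : 0 ≤ p := le_max_right _ _
      have hm0 : 0 ≤ m := le_max_right _ _
      have hpm : φh = p - m := by
        rw [hp, hm]; rcases le_or_gt φh 0 with h | h
        · rw [max_eq_right h, max_eq_left (by linarith)]; ring
        · rw [max_eq_left h.le, max_eq_right (by linarith)]; ring
      have hΩh : 0 ≤ hv - Ωv * hh := by
        nlinarith [mul_nonneg hΩ0 (sub_nonneg.mpr hhv), mul_nonneg (sub_nonneg.mpr hΩ1) hv0]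
      rw [hpm, ← mul_le_mul_iff_of_pos_right hd]
      field_simp
      nlinarith [mul_nonneg hp0 (sub_nonneg.mpr henv), mul_nonneg hm0 (mul_nonneg hΩh hd.le)]

lemma input_key (x xt φ e : ℝ) (hx : x = 0 ∨ x = 1) (hxt0 : 0 ≤ xt) (hxt1 : xt ≤ 1)
    (he : 0 ≤ e) :
    φ * (xt - x) ≤ max ((max φ 0 * (1 - x) + max (-φ) 0 * x) - e) 0 + e * |xt - x| := by
  have hΨ0 : (0:ℝ) ≤ max ((max φ 0 * (1 - x) + max (-φ) 0 * x) - e) 0 := le_max_right _ _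
  rcases hx with h | h <;> subst h
  · rw [abs_of_nonneg (by linarith : (0:ℝ) ≤ xt - 0)]
    have h1 : max φ 0 * (1 - 0) + max (-φ) 0 * 0 - e ≤
        max ((max φ 0 * (1 - 0) + max (-φ) 0 * 0) - e) 0 := le_max_left _ _
    nlinarith [le_max_left φ 0, le_max_right φ 0,
      mul_le_mul_of_nonneg_right h1 hxt0, mul_le_mul_of_nonneg_right (le_max_left φ 0 : φ ≤ max φ 0) hxt0]
  · rw [abs_of_nonpos (by linarith : xt - 1 ≤ 0)]
    have h1 : max φ 0 * (1 - 1) + max (-φ) 0 * 1 - e ≤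
        max ((max φ 0 * (1 - 1) + max (-φ) 0 * 1) - e) 0 := le_max_left _ _
    nlinarith [le_max_left (-φ) 0, le_max_right (-φ) 0,
      mul_le_mul_of_nonneg_right h1 (by linarith : (0:ℝ) ≤ 1 - xt),
      mul_le_mul_of_nonneg_right (le_max_left (-φ) 0 : -φ ≤ max (-φ) 0) (by linarith : (0:ℝ) ≤ 1 - xt)]
lemma frob_sum {a b c d : ℕ} (P : Matrix (Fin a) (Fin d) ℝ) (A : Matrix (Fin a) (Fin b) ℝ)
    (H : Matrix (Fin b) (Fin c) ℝ) (W : Matrix (Fin c) (Fin d) ℝ) :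
    ∑ i, ∑ j, P i j * (A * H * W) i j = ∑ n, ∑ m, (A.transpose * P * W.transpose) n m * H n m := by
  have h1 : ∀ {p r : ℕ} (U : Matrix (Fin p) (Fin r) ℝ) (V : Matrix (Fin p) (Fin r) ℝ),
      ∑ i, ∑ j, U i j * V i j = Matrix.trace (U.transpose * V) := by
    intro p r U V
    simp [Matrix.trace, Matrix.mul_apply, Matrix.diag]
    rw [Finset.sum_comm]
  rw [h1, h1]
  rw [Matrix.transpose_mul, Matrix.transpose_mul, Matrix.transpose_transpose]
  rw [show W * (P.transpose * A.transpose.transpose) * H = W * ((P.transpose * A * H)) by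
    rw [Matrix.transpose_transpose, Matrix.mul_assoc, Matrix.mul_assoc]]
  rw [Matrix.trace_mul_comm W (P.transpose * A * H), Matrix.mul_assoc, Matrix.mul_assoc,
    ← Matrix.mul_assoc P.transpose A (H * W)]

lemma weak_duality {ℓ : ℕ} (net : SlicedGNN ℓ) (q Q : ℕ)
    (X Xt : Matrix (Fin (net.nd 1)) (Fin (net.fd 1)) ℝ)
    (hX : ∀ n d, X n d = 0 ∨ X n d = 1)
    (hXt : Xt ∈ XsetRel X q Q)
    (R S : (l : ℕ) → Matrix (Fin (net.nd l)) (Fin (net.fd l)) ℝ)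
    (c : Fin (net.fd (ℓ + 2)) → ℝ)
    (Ω : (l : ℕ) → Matrix (Fin (net.nd l)) (Fin (net.fd l)) ℝ)
    (η : Fin (net.nd 1) → ℝ) (ρ : ℝ)
    (Φ Φhat : (l : ℕ) → Matrix (Fin (net.nd l)) (Fin (net.fd l)) ℝ)
    (hfeas : net.DualFeasible R S c Ω η ρ Φ Φhat)
    (Hv : (l : ℕ) → Matrix (Fin (net.nd (l + 1))) (Fin (net.fd (l + 1))) ℝ)
    (hZ : net.InZ R S Xt Hv) :
    net.dualObj R S X q Q η ρ Φ Φhat ≤ cdot c (net.outZ Hv) := by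
  obtain ⟨hΩ, hη, hρ, hΦL, hΦhat, hΦ⟩ := hfeas
  obtain ⟨hHv0, hHv⟩ := hZ
  obtain ⟨hXt01, hXtQ, hXtq⟩ := hXt
  -- telescoping over hidden layers
  have tele : ∀ m, m ≤ ℓ →
      (∑ k ∈ Finset.range m, ∑ i, ∑ j,
        if R (k + 2) i j < 0 ∧ 0 < S (k + 2) i j then
          S (k + 2) i j * R (k + 2) i j / (S (k + 2) i j - R (k + 2) i j) *
            max (Φhat (k + 2) i j) 0
        else 0) -
      (∑ k ∈ Finset.range m, ∑ i, ∑ j, Φ (k + 2) i j * net.b (k + 1) j) -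
      (∑ n, ∑ d, Φhat 1 n d * Hv 0 n d)
        ≤ -(∑ i, ∑ j, Φhat (m + 1) i j * Hv m i j) := by
    intro m
    induction m with
    | zero => intro _; simp
    | succ m ih =>
      intro hm
      have hmℓ : m < ℓ := hm
      have ihle := ih (le_of_lt hmℓ)
      -- pointwise inequality at layer m+2
      have step : ∑ i, ∑ j,
          ((if R (m + 2) i j < 0 ∧ 0 < S (m + 2) i j then
            S (m + 2) i j * R (m + 2) i j / (S (m + 2) i j - R (m + 2) i j) *
              max (Φhat (m + 2) i j) 0 else 0) -
           Φ (m + 2) i j * ((net.A (m + 1) * Hv m * net.W (m + 1)) i j + net.b (m + 1) j))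
          ≤ ∑ i, ∑ j, -(Φhat (m + 2) i j * Hv (m + 1) i j) := by
        apply Finset.sum_le_sum; intro i _
        apply Finset.sum_le_sum; intro j _
        have hz := hHv m hmℓ i j
        have hf := hΦ m hmℓ i j
        exact entry_key (R (m+2) i j) (S (m+2) i j) (Hv (m+1) i j)
          ((net.A (m + 1) * Hv m * net.W (m + 1)) i j + net.b (m + 1) j)
          (Φhat (m+2) i j) (Φ (m+2) i j) (Ω (m+2) i j)
          (hΩ m hmℓ i j).1 (hΩ m hmℓ i j).2 hz.1 hz.2.1 (fun hr hs => hz.2.2 hr hs)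
          hf.1 hf.2.1 hf.2.2
      -- rewrite the Φ(m+2)·ĥ sum
      have hfr : ∑ i, ∑ j, Φ (m + 2) i j * (net.A (m + 1) * Hv m * net.W (m + 1)) i j
          = ∑ n, ∑ d, Φhat (m + 1) n d * Hv m n d := by
        rw [frob_sum]
        rw [hΦhat (m + 1) (Nat.le_add_left 1 m) (by omega)]
      have expand : ∑ i, ∑ j,
          Φ (m + 2) i j * ((net.A (m + 1) * Hv m * net.W (m + 1)) i j + net.b (m + 1) j)
          = (∑ n, ∑ d, Φhat (m + 1) n d * Hv m n d)
            + ∑ i, ∑ j, Φ (m + 2) i j * net.b (m + 1) j := by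
        rw [← hfr, ← Finset.sum_add_distrib]
        congr 1; ext i
        rw [← Finset.sum_add_distrib]
        congr 1; ext j; ring
      rw [Finset.sum_range_succ, Finset.sum_range_succ]
      calc (∑ k ∈ Finset.range m, ∑ i, ∑ j,
            if R (k + 2) i j < 0 ∧ 0 < S (k + 2) i j then
              S (k + 2) i j * R (k + 2) i j / (S (k + 2) i j - R (k + 2) i j) *
                max (Φhat (k + 2) i j) 0 else 0) +
            (∑ i, ∑ j, if R (m + 2) i j < 0 ∧ 0 < S (m + 2) i j then
              S (m + 2) i j * R (m + 2) i j / (S (m + 2) i j - R (m + 2) i j) *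
                max (Φhat (m + 2) i j) 0 else 0) -
            ((∑ k ∈ Finset.range m, ∑ i, ∑ j, Φ (k + 2) i j * net.b (k + 1) j) +
              ∑ i, ∑ j, Φ (m + 2) i j * net.b (m + 1) j) -
            (∑ n, ∑ d, Φhat 1 n d * Hv 0 n d)
          ≤ -(∑ i, ∑ j, Φhat (m + 1) i j * Hv m i j) +
            ((∑ i, ∑ j, if R (m + 2) i j < 0 ∧ 0 < S (m + 2) i j then
              S (m + 2) i j * R (m + 2) i j / (S (m + 2) i j - R (m + 2) i j) *
                max (Φhat (m + 2) i j) 0 else 0) -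
              ∑ i, ∑ j, Φ (m + 2) i j * net.b (m + 1) j) := by linarith
        _ ≤ -(∑ i, ∑ j, Φhat (m + 2) i j * Hv (m + 1) i j) := by
            have h2 : ∑ i, ∑ j,
                ((if R (m + 2) i j < 0 ∧ 0 < S (m + 2) i j then
                  S (m + 2) i j * R (m + 2) i j / (S (m + 2) i j - R (m + 2) i j) *
                    max (Φhat (m + 2) i j) 0 else 0) -
                 Φ (m + 2) i j * ((net.A (m + 1) * Hv m * net.W (m + 1)) i j + net.b (m + 1) j))
                = (∑ i, ∑ j, if R (m + 2) i j < 0 ∧ 0 < S (m + 2) i j then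
                    S (m + 2) i j * R (m + 2) i j / (S (m + 2) i j - R (m + 2) i j) *
                      max (Φhat (m + 2) i j) 0 else 0)
                  - ((∑ n, ∑ d, Φhat (m + 1) n d * Hv m n d)
                    + ∑ i, ∑ j, Φ (m + 2) i j * net.b (m + 1) j) := by
              rw [← expand, ← Finset.sum_sub_distrib]
              congr 1; ext i; rw [← Finset.sum_sub_distrib]
            have h3 : ∑ i, ∑ j, -(Φhat (m + 2) i j * Hv (m + 1) i j)
                = -(∑ i, ∑ j, Φhat (m + 2) i j * Hv (m + 1) i j) := by
              simp [Finset.sum_neg_distrib]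
            rw [h2, h3] at step
            linarith
  -- final assembly
  -- output identity
  have hout : cdot c (net.outZ Hv)
      = -((∑ n, ∑ d, Φhat (ℓ + 1) n d * Hv ℓ n d)
          + ∑ i, ∑ j, Φ (ℓ + 2) i j * net.b (ℓ + 1) j) := by
    have hfr : ∑ i, ∑ j, Φ (ℓ + 2) i j * (net.A (ℓ + 1) * Hv ℓ * net.W (ℓ + 1)) i j
        = ∑ n, ∑ d, Φhat (ℓ + 1) n d * Hv ℓ n d := by
      rw [frob_sum, hΦhat (ℓ + 1) (Nat.le_add_left 1 ℓ) le_rfl]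
    rw [← hfr]
    unfold cdot SlicedGNN.outZ
    rw [← Finset.sum_add_distrib, ← Finset.sum_neg_distrib]
    apply Finset.sum_congr rfl; intro i _
    rw [← Finset.sum_add_distrib, ← Finset.sum_neg_distrib]
    apply Finset.sum_congr rfl; intro j _
    rw [hΦL i j]
    simp [Matrix.of_apply]; ring
  -- input bound
  set δ : Fin (net.nd 1) → Fin (net.fd 1) → ℝ := fun n d => |Xt n d - X n d| with hδ
  set Ψ : Fin (net.nd 1) → Fin (net.fd 1) → ℝ := fun n d =>
    max ((max (Φhat 1 n d) 0 * (1 - X n d) + max (-Φhat 1 n d) 0 * X n d) - (η n + ρ)) 0 with hΨ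
  have e1 : ∑ n, ∑ d, (Φhat 1 n d * Xt n d - X n d * Φhat 1 n d)
      ≤ ∑ n, ∑ d, (Ψ n d + (η n + ρ) * δ n d) := by
    apply Finset.sum_le_sum; intro n _
    apply Finset.sum_le_sum; intro d _
    have := input_key (X n d) (Xt n d) (Φhat 1 n d) (η n + ρ) (hX n d)
      (hXt01 n d).1 (hXt01 n d).2 (by have := hη n; linarith)
    simp only [hδ, hΨ]
    nlinarith [this]
  have e2 : ∑ n, ∑ d, (Φhat 1 n d * Xt n d - X n d * Φhat 1 n d)
      = (∑ n, ∑ d, Φhat 1 n d * Xt n d) - ∑ n, ∑ d, X n d * Φhat 1 n d := by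
    rw [← Finset.sum_sub_distrib]
    apply Finset.sum_congr rfl; intro n _
    rw [← Finset.sum_sub_distrib]
  have e3 : ∑ n, ∑ d, (Ψ n d + (η n + ρ) * δ n d)
      = (∑ n, ∑ d, Ψ n d) + (∑ n, η n * ∑ d, δ n d) + ρ * ∑ n, ∑ d, δ n d := by
    simp only [Finset.sum_add_distrib, Finset.mul_sum, add_mul]
    ring
  have e4 : (∑ n, η n * ∑ d, δ n d) ≤ (q : ℝ) * ∑ n, η n := by
    rw [Finset.mul_sum]
    apply Finset.sum_le_sum; intro n _
    calc η n * ∑ d, δ n d ≤ η n * q :=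
          mul_le_mul_of_nonneg_left (hXtq n) (hη n)
      _ = (q : ℝ) * η n := by ring
  have e5 : ρ * (∑ n, ∑ d, δ n d) ≤ (Q : ℝ) * ρ := by
    calc ρ * (∑ n, ∑ d, δ n d) ≤ ρ * Q := mul_le_mul_of_nonneg_left hXtQ hρ
      _ = (Q : ℝ) * ρ := by ring
  have inputb : (∑ n, ∑ d, Φhat 1 n d * Xt n d)
      ≤ (∑ n, ∑ d, X n d * Φhat 1 n d) + (∑ n, ∑ d, Ψ n d)
        + (q : ℝ) * (∑ n, η n) + (Q : ℝ) * ρ := by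
    rw [e2] at e1; rw [e3] at e1; linarith
  have teleℓ := tele ℓ le_rfl
  rw [hHv0] at teleℓ
  unfold SlicedGNN.dualObj
  rw [hout, Finset.sum_range_succ
    (f := fun l => ∑ i, ∑ j, Φ (l + 2) i j * net.b (l + 1) j) ℓ]
  simp only [hΨ] at inputb
  linarith

lemma bin_subset_rel {N D : ℕ} (X : Matrix (Fin N) (Fin D) ℝ)
    (hX : ∀ n d, X n d = 0 ∨ X n d = 1) (q Q : ℕ) :
    XsetBin X q Q ⊆ XsetRel X q Q := by
  rintro Xt ⟨h01, hQ, hq⟩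
  have hind : ∀ n d, |Xt n d - X n d| ≤ (if Xt n d ≠ X n d then (1:ℝ) else 0) := by
    intro n d
    by_cases h : Xt n d = X n d
    · simp [h]
    · rw [if_pos h]
      rcases h01 n d with h1 | h1 <;> rcases hX n d with h2 | h2 <;>
        rw [h1, h2] <;> norm_num
  have h01' : ∀ n d, 0 ≤ Xt n d ∧ Xt n d ≤ 1 := by
    intro n d; rcases h01 n d with h | h <;> rw [h] <;> norm_num
  refine ⟨h01', ?_, ?_⟩
  · calc ∑ n, ∑ d, |Xt n d - X n d|
        ≤ ∑ n, ∑ d, (if Xt n d ≠ X n d then (1:ℝ) else 0) := by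
          apply Finset.sum_le_sum; intro n _
          exact Finset.sum_le_sum fun d _ => hind n d
      _ = ((Finset.univ.filter fun p : Fin N × Fin D => Xt p.1 p.2 ≠ X p.1 p.2).card : ℝ) := by
          rw [← Finset.sum_product']
          rw [Finset.card_filter]
          push_cast
          rfl
      _ ≤ (Q : ℝ) := by exact_mod_cast hQ
  · intro n
    calc ∑ d, |Xt n d - X n d|
        ≤ ∑ d, (if Xt n d ≠ X n d then (1:ℝ) else 0) :=
          Finset.sum_le_sum fun d _ => hind n d
      _ = ((Finset.univ.filter fun d : Fin D => Xt n d ≠ X n d).card : ℝ) := by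
          rw [Finset.card_filter]; push_cast; rfl
      _ ≤ (q : ℝ) := by exact_mod_cast hq n

lemma exact_inZ {ℓ : ℕ} (net : SlicedGNN ℓ) (q Q : ℕ)
    (X Xt : Matrix (Fin (net.nd 1)) (Fin (net.fd 1)) ℝ)
    (hXt : Xt ∈ XsetRel X q Q)
    (R S : (l : ℕ) → Matrix (Fin (net.nd l)) (Fin (net.fd l)) ℝ)
    (hValid : ∀ Xt ∈ XsetRel X q Q, ∀ k < ℓ, ∀ i j,
      R (k + 2) i j ≤ net.pre Xt (k + 1) i j ∧ net.pre Xt (k + 1) i j ≤ S (k + 2) i j) :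
    net.InZ R S Xt (net.post Xt) := by
  constructor
  · rfl
  · intro k hk i j
    have hpre : net.pre Xt (k + 1) i j
        = (net.A (k + 1) * net.post Xt k * net.W (k + 1)) i j + net.b (k + 1) j := rfl
    have hpost : net.post Xt (k + 1) i j
        = max ((net.A (k + 1) * net.post Xt k * net.W (k + 1)) i j + net.b (k + 1) j) 0 := rfl
    obtain ⟨hlo, hhi⟩ := hValid Xt hXt k hk i j
    rw [hpre] at hlo hhi
    refine ⟨?_, ?_, ?_⟩
    · intro hS; rw [hpost]; exact max_eq_right (by linarith)
    · intro hR _; rw [hpost]; exact max_eq_left (by linarith)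
    · intro hR hS
      rw [hpost]
      refine ⟨le_max_right _ _, le_max_left _ _, ?_⟩
      rcases le_or_gt ((net.A (k + 1) * net.post Xt k * net.W (k + 1)) i j + net.b (k + 1) j) 0
        with h | h
      · rw [max_eq_right h]; nlinarith
      · rw [max_eq_left h.le]; nlinarith

/-- **Robustness certificate soundness.**  For binary `X` and valid bounds: if for every
class `y ≠ y*` there exist dual-feasible variables whose dual objective
`g(X, e_{y*} − e_y, Ω, η, ρ)` is positive, then no admissible perturbation
`X̃ ∈ X_{q,Q}(X)` changes the prediction away from `y*`:  the exact GNN output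
satisfies `f(X̃)_{y*} > f(X̃)_y` for every `y ≠ y*`. -/
theorem certificate_soundness {ℓ : ℕ} (net : SlicedGNN ℓ) (q Q : ℕ)
    (X : Matrix (Fin (net.nd 1)) (Fin (net.fd 1)) ℝ)
    (hX : ∀ n d, X n d = 0 ∨ X n d = 1)
    (R S : (l : ℕ) → Matrix (Fin (net.nd l)) (Fin (net.fd l)) ℝ)
    (hRS : ∀ k < ℓ, ∀ i j, R (k + 2) i j ≤ S (k + 2) i j)
    (hValid : ∀ Xt ∈ XsetRel X q Q, ∀ k < ℓ, ∀ i j,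
      R (k + 2) i j ≤ net.pre Xt (k + 1) i j ∧ net.pre Xt (k + 1) i j ≤ S (k + 2) i j)
    (ystar : Fin (net.fd (ℓ + 2)))
    (hcert : ∀ y : Fin (net.fd (ℓ + 2)), y ≠ ystar →
      ∃ (Ω Φ Φhat : (l : ℕ) → Matrix (Fin (net.nd l)) (Fin (net.fd l)) ℝ)
        (η : Fin (net.nd 1) → ℝ) (ρ : ℝ),
        net.DualFeasible R S
          (fun k => (if k = ystar then (1 : ℝ) else 0) - (if k = y then (1 : ℝ) else 0))
          Ω η ρ Φ Φhat ∧
        0 < net.dualObj R S X q Q η ρ Φ Φhat) :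
    ∀ Xt ∈ XsetBin X q Q, ∀ y : Fin (net.fd (ℓ + 2)), y ≠ ystar →
      ∀ i, net.pre Xt (ℓ + 1) i y < net.pre Xt (ℓ + 1) i ystar := by
  intro Xt hXtBin y hy i
  obtain ⟨Ω, Φ, Φhat, η, ρ, hfeas, hg⟩ := hcert y hy
  have hrel : Xt ∈ XsetRel X q Q := bin_subset_rel X hX q Q hXtBin
  have hZ : net.InZ R S Xt (net.post Xt) := exact_inZ net q Q X Xt hrel R S hValid
  have hwd := weak_duality net q Q X Xt hX hrel R S
    (fun k => (if k = ystar then (1 : ℝ) else 0) - (if k = y then (1 : ℝ) else 0))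
    Ω η ρ Φ Φhat hfeas (net.post Xt) hZ
  have hpos : 0 < cdot
      (fun k => (if k = ystar then (1 : ℝ) else 0) - (if k = y then (1 : ℝ) else 0))
      (net.outZ (net.post Xt)) := lt_of_lt_of_le hg hwd
  set M := net.outZ (net.post Xt) with hM
  have hcd : cdot
      (fun k => (if k = ystar then (1 : ℝ) else 0) - (if k = y then (1 : ℝ) else 0)) M
      = ∑ i' : Fin (net.nd (ℓ + 2)), (M i' ystar - M i' y) := by
    unfold cdot
    apply Finset.sum_congr rfl; intro i' _
    simp [sub_mul, Finset.sum_sub_distrib, ite_mul]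
  have huniq : ∀ i' : Fin (net.nd (ℓ + 2)), i' = i := by
    have : Subsingleton (Fin (net.nd (ℓ + 2))) := by
      rw [net.last_single]; infer_instance
    intro i'
    exact Subsingleton.elim i' i
  have hsum : ∑ i' : Fin (net.nd (ℓ + 2)), (M i' ystar - M i' y) = M i ystar - M i y := by
    calc ∑ i' : Fin (net.nd (ℓ + 2)), (M i' ystar - M i' y)
        = ∑ _i' : Fin (net.nd (ℓ + 2)), (M i ystar - M i y) :=
          Finset.sum_congr rfl fun i' _ => by rw [huniq i']
      _ = (net.nd (ℓ + 2)) • (M i ystar - M i y) := by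
          rw [Finset.sum_const, Finset.card_univ, Fintype.card_fin]
      _ = M i ystar - M i y := by rw [net.last_single, one_smul]
  rw [hcd, hsum] at hpos
  linarith [show (0:ℝ) < net.pre Xt (ℓ + 1) i ystar - net.pre Xt (ℓ + 1) i y from hpos]
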